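/- arXiv:2105.11419 — 2 statements merged into one kernel-verified Lean document; each statement's English description precedes it below -/
import Mathlib

section
/- Let (x, y, u, v) : I → ℝ⁴ be a solution of the system ẋ = u, ẏ = v, u̇ = (1 − u² − v²) u − x, v̇ = (1 − u² − v²) v − y, such that v(t) x(t) − u(t) y(t) ≠ 0 for all t ∈ I. Then the function L(t) = x(t)² + y(t)² + u(t)² + v(t)² − log( (v(t) x(t) − u(t) y(t))² ) is differentiable on I and satisfies dL/dt = −2 (1 − u(t)² − v(t)²)² ≤ 0 for all t ∈ I. -/
/-! The angular momentum `W = v x - u y` and the energy `E = x² + y² + u² + v²` of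
`r̈ = k ṙ - r` obey `W' = k W` and `E' = 2 k |ṙ|²`, so `(log W²)' = 2 k` and
`(E - log W²)' = -2 k (1 - |ṙ|²)`, which is `-2 k²` for `k = 1 - |ṙ|²`. -/

section DampedOscillator

variable {x y u v : ℝ → ℝ} {k t : ℝ}

theorem hasDerivAt_angularMomentum (hx : HasDerivAt x (u t) t) (hy : HasDerivAt y (v t) t)
    (hu : HasDerivAt u (k * u t - x t) t) (hv : HasDerivAt v (k * v t - y t) t) :
    HasDerivAt (fun s => v s * x s - u s * y s) (k * (v t * x t - u t * y t)) t := by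
  refine ((hv.mul hx).sub (hu.mul hy)).congr_deriv ?_
  ring

theorem hasDerivAt_energy (hx : HasDerivAt x (u t) t) (hy : HasDerivAt y (v t) t)
    (hu : HasDerivAt u (k * u t - x t) t) (hv : HasDerivAt v (k * v t - y t) t) :
    HasDerivAt (fun s => x s ^ 2 + y s ^ 2 + u s ^ 2 + v s ^ 2)
      (2 * k * (u t ^ 2 + v t ^ 2)) t := by
  refine ((((hx.fun_pow 2).add (hy.fun_pow 2)).add (hu.fun_pow 2)).add
    (hv.fun_pow 2)).congr_deriv ?_
  ring

end DampedOscillator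

theorem HasDerivAt.log_sq_of_eq_mul {w : ℝ → ℝ} {k t : ℝ} (hw : HasDerivAt w (k * w t) t)
    (hwt : w t ≠ 0) : HasDerivAt (fun s => Real.log (w s ^ 2)) (2 * k) t := by
  refine ((hw.fun_pow 2).log (pow_ne_zero 2 hwt)).congr_deriv ?_
  field_simp
  ring

/-- Along solutions of `ẋ = u, ẏ = v, u̇ = (1-u²-v²)u - x, v̇ = (1-u²-v²)v - y` that stay
in the region `Ω = {vx ≠ uy}`, the function
`L = x² + y² + u² + v² - log((vx - uy)²)` is differentiable with
`dL/dt = -2(1 - u² - v²)² ≤ 0`. -/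
theorem L_monotone (I : Set ℝ) (x y u v : ℝ → ℝ)
    (hx : ∀ t ∈ I, HasDerivAt x (u t) t)
    (hy : ∀ t ∈ I, HasDerivAt y (v t) t)
    (hu : ∀ t ∈ I, HasDerivAt u ((1 - u t ^ 2 - v t ^ 2) * u t - x t) t)
    (hv : ∀ t ∈ I, HasDerivAt v ((1 - u t ^ 2 - v t ^ 2) * v t - y t) t)
    (hW : ∀ t ∈ I, v t * x t - u t * y t ≠ 0) :
    ∀ t ∈ I,
      HasDerivAt (fun s => x s ^ 2 + y s ^ 2 + u s ^ 2 + v s ^ 2 -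
          Real.log ((v s * x s - u s * y s) ^ 2))
        (-2 * (1 - u t ^ 2 - v t ^ 2) ^ 2) t ∧
      -2 * (1 - u t ^ 2 - v t ^ 2) ^ 2 ≤ 0 := by
  intro t ht
  have hE := hasDerivAt_energy (hx t ht) (hy t ht) (hu t ht) (hv t ht)
  have hlogW :=
    (hasDerivAt_angularMomentum (hx t ht) (hy t ht) (hu t ht) (hv t ht)).log_sq_of_eq_mul (hW t ht)
  refine ⟨?_, by linarith [sq_nonneg (1 - u t ^ 2 - v t ^ 2)]⟩
  refine (hE.sub hlogW).congr_deriv ?_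
  ring
end

section
/- Failure of Taylor truncation in the appendix example. Let k ≥ 2 be an even integer and let T(x) = ∑_{j=0}^{k−1} (−1)^j x^{2j+1} / (2j+1)! be the Taylor polynomial of sin of degree 2k − 1 at 0. Then the origin is asymptotically stable for the truncated planar system ẋ = x (y − x sin x), ẏ = −y² (y − x T(x)): the origin is Lyapunov stable and there exists a neighborhood U of (0,0) such that every solution with initial condition in U converges to (0,0) as t → ∞. (In contrast, the origin is not asymptotically stable for the untruncated system ẋ = x (y − x sin x), ẏ = −y² (y − x sin x).) -/
open scoped BigOperators

/-- `(x, y)` is a solution on `[0, ∞)` of the truncated appendix system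
`ẋ = x (y - x sin x)`, `ẏ = -y² (y - x T(x))`, where `T` is the degree `2k-1` Taylor
polynomial of `sin` at `0`. -/
def IsTruncatedSolution (k : ℕ) (x y : ℝ → ℝ) : Prop :=
  ∀ t : ℝ, 0 ≤ t →
    HasDerivAt x (x t * (y t - x t * Real.sin (x t))) t ∧
    HasDerivAt y (-(y t) ^ 2 *
      (y t - x t * ∑ j ∈ Finset.range k,
        (-1 : ℝ) ^ j * x t ^ (2 * j + 1) / (Nat.factorial (2 * j + 1)))) t

/-!
Write `P(x) = x sin x` and `Q(x) = x T(x)`. For even `k` the Taylor polynomials of `sin` alternate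
around it, so `0 ≤ Q < P` on `(0, 1]`. Both equations have the form `ż = z g`, so `x` and `y` keep
their signs, and `x ↦ -x` is a symmetry; take `x ≥ 0`. The field points into the box
`[0, a) × (-a sin a, a sin a)` on each of its sides, which gives stability. For attraction take
`a = 1`. If `y ≤ 0`, then `x` decreases and `y` increases; if `y > P(x)` for all time, then `x`
increases and `y` decreases; otherwise `y ≤ P(x)` from some time on and `x` decreases. A convergent
function whose derivative converges has derivative tending to `0`, so the limits form an
equilibrium, and the only equilibrium with `0 ≤ x ≤ 1` is the origin because `Q ≠ P` there. In the
last case, if `x` stays above some `m > 0`, then `y → 0` because `log x - 1 / y` has derivative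
`Q(x) - P(x) ≤ -ρ < 0`.
-/

open Real Filter Set Topology

lemma monotoneOn_Ici_of_hasDerivAt_nonneg {f f' : ℝ → ℝ} {a : ℝ}
    (hf : ∀ t ≥ a, HasDerivAt f (f' t) t) (hf' : ∀ t > a, 0 ≤ f' t) : MonotoneOn f (Ici a) :=
  monotoneOn_of_hasDerivWithinAt_nonneg (convex_Ici a)
    (fun t ht => (hf t ht).continuousAt.continuousWithinAt)
    (fun t ht => (hf t (le_of_lt (by simpa using ht))).hasDerivWithinAt)
    (fun t ht => hf' t (by simpa using ht))

lemma antitoneOn_Ici_of_hasDerivAt_nonpos {f f' : ℝ → ℝ} {a : ℝ}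
    (hf : ∀ t ≥ a, HasDerivAt f (f' t) t) (hf' : ∀ t > a, f' t ≤ 0) : AntitoneOn f (Ici a) :=
  antitoneOn_of_hasDerivWithinAt_nonpos (convex_Ici a)
    (fun t ht => (hf t ht).continuousAt.continuousWithinAt)
    (fun t ht => (hf t (le_of_lt (by simpa using ht))).hasDerivWithinAt)
    (fun t ht => hf' t (by simpa using ht))

lemma pos_of_hasDerivAt_pos {F F' : ℝ → ℝ} {r : ℝ} (h0 : F 0 = 0)
    (hF : ∀ v, HasDerivAt F (F' v) v) (hF' : ∀ v ∈ Ioo 0 r, 0 < F' v) :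
    ∀ v ∈ Ioo 0 r, 0 < F v := by
  intro v hv
  have hmono : StrictMonoOn F (Icc 0 v) :=
    strictMonoOn_of_hasDerivWithinAt_pos (convex_Icc 0 v)
      (fun w _ => (hF w).continuousAt.continuousWithinAt)
      (fun w _ => (hF w).hasDerivWithinAt)
      (fun w hw => by
        rw [interior_Icc] at hw
        exact hF' w ⟨hw.1, hw.2.trans hv.2⟩)
  simpa [h0] using hmono (left_mem_Icc.2 hv.1.le) (right_mem_Icc.2 hv.1.le) hv.1

lemma eq_mul_exp_integral_of_hasDerivAt {z g : ℝ → ℝ} {a : ℝ} (hg : ContinuousOn g (Ici a))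
    (hz : ∀ t ≥ a, HasDerivAt z (z t * g t) t) {t : ℝ} (ht : a ≤ t) :
    z t = z a * exp (∫ s in a..t, g s) := by
  -- `g` is extended to the left of `a` so that its primitive is differentiable at `a`.
  set g' : ℝ → ℝ := fun s => g (max s a)
  have hg' : Continuous g' :=
    hg.comp_continuous (continuous_id.max continuous_const) fun s => le_max_right s a
  have hg'g : ∀ s ≥ a, g' s = g s := fun s hs => by simp only [g', max_eq_left hs]
  set w : ℝ → ℝ := fun s => z s * exp (-∫ u in a..s, g' u)
  have hw : ∀ s ≥ a, HasDerivAt w 0 s := fun s hs => by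
    refine ((hz s hs).mul ((hg'.integral_hasStrictDerivAt a s).hasDerivAt.neg.exp)).congr_deriv ?_
    rw [hg'g s hs]
    ring
  have hconst := constant_of_has_deriv_right_zero
    (fun s hs => (hw s hs.1).continuousAt.continuousWithinAt)
    (fun s hs => (hw s hs.1).hasDerivWithinAt) t ⟨ht, le_rfl⟩
  have hint : ∫ s in a..t, g' s = ∫ s in a..t, g s :=
    intervalIntegral.integral_congr fun s hs => hg'g s (by rw [uIcc_of_le ht] at hs; exact hs.1)
  simp only [w, intervalIntegral.integral_same, neg_zero, exp_zero, mul_one, hint] at hconst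
  rw [← hconst, mul_assoc, ← exp_add, neg_add_cancel, exp_zero, mul_one]

lemma HasDerivAt.nonneg_of_eventually_le_left {f : ℝ → ℝ} {d τ : ℝ} (hf : HasDerivAt f d τ)
    (h : ∀ᶠ t in 𝓝[<] τ, f t ≤ f τ) : 0 ≤ d := by
  have hslope : Tendsto (slope f τ) (𝓝[<] τ) (𝓝 d) :=
    (hasDerivAt_iff_tendsto_slope.mp hf).mono_left (nhdsWithin_mono τ fun t ht => ne_of_lt ht)
  refine ge_of_tendsto hslope ?_
  filter_upwards [h, self_mem_nhdsWithin] with t hft ht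
  rw [slope_def_field]
  exact div_nonneg_of_nonpos (sub_nonpos.2 hft) (sub_nonpos.2 (le_of_lt ht))

lemma ContinuousOn.forall_mem_of_forall_Ico_mem {X : Type*} [TopologicalSpace X] {γ : ℝ → X}
    {U : Set X} {a : ℝ} (hγ : ContinuousOn γ (Ici a)) (hU : IsOpen U) (ha : γ a ∈ U)
    (hstep : ∀ τ > a, (∀ t ∈ Ico a τ, γ t ∈ U) → γ τ ∈ U) : ∀ t ≥ a, γ t ∈ U := by
  by_contra! ⟨s, hs, hγs⟩
  set K := Icc a s ∩ γ ⁻¹' Uᶜ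
  have hK : IsClosed K :=
    (hγ.mono Icc_subset_Ici_self).preimage_isClosed_of_isClosed isClosed_Icc hU.isClosed_compl
  have hKne : K.Nonempty := ⟨s, ⟨hs, le_rfl⟩, hγs⟩
  have hτK : sInf K ∈ K := hK.csInf_mem hKne ⟨a, fun t ht => ht.1.1⟩
  have hτa : a < sInf K := lt_of_le_of_ne hτK.1.1 fun h => hτK.2 (h ▸ ha)
  refine hτK.2 (hstep _ hτa fun t ht => ?_)
  by_contra hγt
  have htK : t ∈ K := ⟨⟨ht.1, ht.2.le.trans hτK.1.2⟩, hγt⟩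
  exact (csInf_le ⟨a, fun t ht => ht.1.1⟩ htK).not_gt ht.2

lemma MonotoneOn.exists_tendsto_atTop {f : ℝ → ℝ} {a b : ℝ} (hf : MonotoneOn f (Ici a))
    (hb : ∀ t ≥ a, f t ≤ b) : ∃ L ≤ b, Tendsto f atTop (𝓝 L) ∧ ∀ t ≥ a, f t ≤ L := by
  set g : ℝ → ℝ := fun t => f (max t a)
  have hg : Monotone g := fun s t hst =>
    hf (le_max_right s a) (le_max_right t a) (max_le_max hst le_rfl)
  have hgb : BddAbove (range g) := ⟨b, by rintro _ ⟨t, rfl⟩; exact hb _ (le_max_right t a)⟩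
  have hfg : g =ᶠ[atTop] f := by
    filter_upwards [eventually_ge_atTop a] with t ht
    simp only [g, max_eq_left ht]
  refine ⟨⨆ t, g t, ciSup_le fun t => hb _ (le_max_right t a),
    (tendsto_atTop_ciSup hg hgb).congr' hfg, fun t ht => ?_⟩
  simpa only [g, max_eq_left ht] using le_ciSup hgb t

lemma AntitoneOn.exists_tendsto_atTop {f : ℝ → ℝ} {a b : ℝ} (hf : AntitoneOn f (Ici a))
    (hb : ∀ t ≥ a, b ≤ f t) : ∃ L ≥ b, Tendsto f atTop (𝓝 L) ∧ ∀ t ≥ a, L ≤ f t := by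
  obtain ⟨L, hLb, hL, hfL⟩ := hf.neg.exists_tendsto_atTop (b := -b) fun t ht => neg_le_neg (hb t ht)
  exact ⟨-L, le_neg.2 hLb, by simpa using hL.neg, fun t ht => neg_le.1 (hfL t ht)⟩

lemma eq_zero_of_tendsto_of_tendsto_deriv {f f' : ℝ → ℝ} {a L c : ℝ}
    (hf : ∀ t ≥ a, HasDerivAt f (f' t) t) (hfL : Tendsto f atTop (𝓝 L))
    (hf'c : Tendsto f' atTop (𝓝 c)) : c = 0 := by
  have hmvt : ∀ n : ℕ, ∃ ξ ∈ Ioo (a + n) (a + n + 1), f' ξ = f (a + n + 1) - f (a + n) := by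
    intro n
    have hn : ∀ t ∈ Icc (a + n) (a + n + 1), HasDerivAt f (f' t) t := fun t ht =>
      hf t (by linarith [ht.1, n.cast_nonneg (α := ℝ)])
    obtain ⟨ξ, hξ, hf'ξ⟩ := exists_hasDerivAt_eq_slope f f' (lt_add_one (a + n))
      (fun t ht => (hn t ht).continuousAt.continuousWithinAt)
      (fun t ht => hn t (Ioo_subset_Icc_self ht))
    exact ⟨ξ, hξ, by rw [hf'ξ, add_sub_cancel_left, div_one]⟩
  choose ξ hξ hf'ξ using hmvt
  have hn : Tendsto (fun n : ℕ => a + n) atTop atTop :=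
    tendsto_atTop_add_const_left _ a tendsto_natCast_atTop_atTop
  have hξ_top : Tendsto ξ atTop atTop := tendsto_atTop_mono (fun n => (hξ n).1.le) hn
  have hdiff : Tendsto (fun n : ℕ => f (a + n + 1) - f (a + n)) atTop (𝓝 (L - L)) :=
    ((hfL.comp (tendsto_atTop_add_const_right _ 1 hn)).sub (hfL.comp hn))
  rw [sub_self] at hdiff
  exact tendsto_nhds_unique (hf'c.comp hξ_top) (hdiff.congr fun n => (hf'ξ n).symm)

noncomputable def sinTaylor (k : ℕ) (u : ℝ) : ℝ :=
  ∑ j ∈ Finset.range k, (-1 : ℝ) ^ j * u ^ (2 * j + 1) / (Nat.factorial (2 * j + 1))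

noncomputable def cosTaylor (k : ℕ) (u : ℝ) : ℝ :=
  ∑ j ∈ Finset.range k, (-1 : ℝ) ^ j * u ^ (2 * j) / (Nat.factorial (2 * j))

lemma hasDerivAt_pow_succ_div_factorial (n : ℕ) (u : ℝ) :
    HasDerivAt (fun v : ℝ => v ^ (n + 1) / (n + 1).factorial) (u ^ n / n.factorial) u := by
  refine ((hasDerivAt_pow (n + 1) u).div_const ((n + 1).factorial : ℝ)).congr_deriv ?_
  rw [Nat.factorial_succ, Nat.cast_mul]
  field_simp
  push_cast
  ring

lemma hasDerivAt_sinTaylor (k : ℕ) (u : ℝ) : HasDerivAt (sinTaylor k) (cosTaylor k u) u := by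
  unfold sinTaylor cosTaylor
  refine HasDerivAt.fun_sum fun j _ => ?_
  simpa only [mul_div_assoc] using
    (hasDerivAt_pow_succ_div_factorial (2 * j) u).const_mul ((-1 : ℝ) ^ j)

lemma hasDerivAt_cosTaylor_succ (k : ℕ) (u : ℝ) :
    HasDerivAt (cosTaylor (k + 1)) (-sinTaylor k u) u := by
  induction k with
  | zero =>
    have h1 : cosTaylor 1 = fun _ => 1 := by ext; simp [cosTaylor]
    simpa [h1, sinTaylor] using hasDerivAt_const u (1 : ℝ)
  | succ k ih =>
    have hsplit : cosTaylor (k + 1 + 1) = fun v => cosTaylor (k + 1) v +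
        (-1 : ℝ) ^ (k + 1) * (v ^ (2 * k + 1 + 1) / (2 * k + 1 + 1).factorial) := by
      ext v
      rw [cosTaylor, Finset.sum_range_succ, ← cosTaylor, mul_div_assoc, mul_add, mul_one]
    rw [hsplit, sinTaylor, Finset.sum_range_succ, ← sinTaylor]
    refine (ih.add ((hasDerivAt_pow_succ_div_factorial (2 * k + 1) u).const_mul
      ((-1 : ℝ) ^ (k + 1)))).congr_deriv ?_
    rw [pow_succ]
    ring

lemma sinTaylor_zero_right (k : ℕ) : sinTaylor k 0 = 0 := by
  simp [sinTaylor]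

lemma cosTaylor_succ_zero_right (k : ℕ) : cosTaylor (k + 1) 0 = 1 := by
  simp [cosTaylor, Finset.sum_range_succ']

lemma sinTaylor_neg (k : ℕ) (u : ℝ) : sinTaylor k (-u) = -sinTaylor k u := by
  simp only [sinTaylor, ← Finset.sum_neg_distrib, Odd.neg_pow (odd_two_mul_add_one _), mul_neg,
    neg_div]

lemma neg_one_pow_mul_sin_sub_sinTaylor_pos (k : ℕ) {u : ℝ} (hu : u ∈ Ioo 0 π) :
    0 < (-1) ^ k * (sin u - sinTaylor k u) := by
  induction k generalizing u with
  | zero => simpa [sinTaylor] using sin_pos_of_pos_of_lt_pi hu.1 hu.2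
  | succ k ih =>
    have hcos : ∀ v ∈ Ioo 0 π, 0 < (-1) ^ (k + 1) * (cos v - cosTaylor (k + 1) v) := by
      refine pos_of_hasDerivAt_pos (F' := fun v => (-1) ^ k * (sin v - sinTaylor k v))
        (by simp [cosTaylor_succ_zero_right]) (fun v => ?_) (fun v hv => ih hv)
      refine (((hasDerivAt_cos v).sub (hasDerivAt_cosTaylor_succ k v)).const_mul
        ((-1 : ℝ) ^ (k + 1))).congr_deriv ?_
      ring
    exact pos_of_hasDerivAt_pos (by simp [sinTaylor_zero_right])
      (fun v => ((hasDerivAt_sin v).sub (hasDerivAt_sinTaylor (k + 1) v)).const_mul _) hcos u hu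

lemma continuous_sinTaylor (k : ℕ) : Continuous (sinTaylor k) :=
  continuous_iff_continuousAt.2 fun u => (hasDerivAt_sinTaylor k u).continuousAt

lemma sinTaylor_lt_sin {k : ℕ} (hk : Even k) {u : ℝ} (hu : u ∈ Ioo 0 π) :
    sinTaylor k u < sin u := by
  have h := neg_one_pow_mul_sin_sub_sinTaylor_pos k hu
  rw [hk.neg_one_pow, one_mul] at h
  linarith

lemma sinTaylor_nonneg {k : ℕ} (hk : Even k) {u : ℝ} (hu0 : 0 ≤ u) (hu1 : u ≤ 1) :
    0 ≤ sinTaylor k u := by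
  rcases hu0.eq_or_lt with rfl | hu0
  · rw [sinTaylor_zero_right]
  rcases Nat.eq_zero_or_pos k with rfl | hk0
  · simp [sinTaylor]
  -- `sinTaylor k u` exceeds `sin u` minus the next term, which is at most `u / 3!`.
  have hsucc : sinTaylor (k + 1) u =
      sinTaylor k u + u ^ (2 * k + 1) / (Nat.factorial (2 * k + 1)) := by
    rw [sinTaylor, Finset.sum_range_succ, hk.neg_one_pow, one_mul, ← sinTaylor]
  have hsin_lt : sin u < sinTaylor (k + 1) u := by
    have h := neg_one_pow_mul_sin_sub_sinTaylor_pos (k + 1) ⟨hu0, by linarith [pi_gt_three]⟩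
    rw [hk.add_one.neg_one_pow, neg_one_mul] at h
    linarith
  have hterm : u ^ (2 * k + 1) / (Nat.factorial (2 * k + 1)) ≤ u / 6 := by
    have hfact : (6 : ℝ) ≤ Nat.factorial (2 * k + 1) := by
      exact_mod_cast (Nat.factorial_le (by omega : 3 ≤ 2 * k + 1)).trans' (by decide)
    gcongr
    exact pow_le_of_le_one hu0.le hu1 (by omega)
  have hsin : u - u ^ 3 / 6 < sin u := sin_gt_sub_cube hu0
  have hcube : u ^ 3 ≤ u := pow_le_of_le_one hu0.le hu1 (by norm_num)
  linarith

lemma mul_sin_pos {u : ℝ} (hu0 : 0 < u) (hu1 : u ≤ 1) : 0 < u * sin u :=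
  mul_pos hu0 (sin_pos_of_pos_of_lt_pi hu0 (by linarith [pi_gt_three]))

lemma monotoneOn_mul_sin : MonotoneOn (fun u => u * sin u) (Icc 0 1) := by
  intro u hu v hv huv
  have hπ : 1 ≤ π / 2 := by linarith [pi_gt_three]
  exact mul_le_mul huv (sin_le_sin_of_le_of_le_pi_div_two (by linarith [hu.1]) (hv.2.trans hπ) huv)
    (sin_nonneg_of_nonneg_of_le_pi hu.1 (by linarith [hu.2])) hv.1

lemma mul_sinTaylor_nonneg {k : ℕ} (hk : Even k) {u : ℝ} (hu0 : 0 ≤ u) (hu1 : u ≤ 1) :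
    0 ≤ u * sinTaylor k u :=
  mul_nonneg hu0 (sinTaylor_nonneg hk hu0 hu1)

lemma mul_sinTaylor_lt_mul_sin {k : ℕ} (hk : Even k) {u : ℝ} (hu0 : 0 < u) (hu1 : u ≤ 1) :
    u * sinTaylor k u < u * sin u :=
  mul_lt_mul_of_pos_left (sinTaylor_lt_sin hk ⟨hu0, by linarith [pi_gt_three]⟩) hu0

lemma mul_sinTaylor_le_mul_sin {k : ℕ} (hk : Even k) {u : ℝ} (hu0 : 0 ≤ u) (hu1 : u ≤ 1) :
    u * sinTaylor k u ≤ u * sin u := by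
  rcases hu0.eq_or_lt with rfl | hu0
  · simp
  · exact (mul_sinTaylor_lt_mul_sin hk hu0 hu1).le

lemma mul_sinTaylor_lt_mul_sin_of_le {k : ℕ} (hk : Even k) {u a : ℝ} (hu0 : 0 ≤ u) (hua : u ≤ a)
    (ha0 : 0 < a) (ha1 : a ≤ 1) : u * sinTaylor k u < a * sin a := by
  rcases hu0.eq_or_lt with rfl | hu0
  · simpa using mul_sin_pos ha0 ha1
  · exact (mul_sinTaylor_lt_mul_sin hk hu0 (hua.trans ha1)).trans_le
      (monotoneOn_mul_sin ⟨hu0.le, hua.trans ha1⟩ ⟨ha0.le, ha1⟩ hua)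

lemma exists_pos_le_mul_sin_sub_mul_sinTaylor {k : ℕ} (hk : Even k) {m : ℝ} (hm : 0 < m) :
    ∃ ρ > 0, ∀ u ∈ Icc m 1, ρ ≤ u * sin u - u * sinTaylor k u := by
  rcases lt_or_ge 1 m with h1 | h1
  · exact ⟨1, one_pos, fun u hu => absurd (hu.1.trans hu.2) (not_le.2 h1)⟩
  obtain ⟨u₀, hu₀, hmin⟩ := isCompact_Icc.exists_isMinOn (nonempty_Icc.2 h1)
    ((continuous_id.mul continuous_sin).sub
      (continuous_id.mul (continuous_sinTaylor k))).continuousOn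
  exact ⟨_, sub_pos.2 (mul_sinTaylor_lt_mul_sin hk (hm.trans_le hu₀.1) hu₀.2), hmin⟩

lemma hasDerivAt_mul_sin (u : ℝ) :
    HasDerivAt (fun v => v * sin v) (sin u + u * cos u) u := by
  simpa using (hasDerivAt_id' u).fun_mul (hasDerivAt_sin u)

namespace IsTruncatedSolution

variable {k : ℕ} {x y : ℝ → ℝ}

lemma hasDerivAt_x (hs : IsTruncatedSolution k x y) {t : ℝ} (ht : 0 ≤ t) :
    HasDerivAt x (x t * (y t - x t * sin (x t))) t :=
  (hs t ht).1

lemma hasDerivAt_y (hs : IsTruncatedSolution k x y) {t : ℝ} (ht : 0 ≤ t) :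
    HasDerivAt y (-y t ^ 2 * (y t - x t * sinTaylor k (x t))) t :=
  (hs t ht).2

lemma continuousOn_x (hs : IsTruncatedSolution k x y) : ContinuousOn x (Ici 0) :=
  fun _ ht => (hs.hasDerivAt_x ht).continuousAt.continuousWithinAt

lemma continuousOn_y (hs : IsTruncatedSolution k x y) : ContinuousOn y (Ici 0) :=
  fun _ ht => (hs.hasDerivAt_y ht).continuousAt.continuousWithinAt

lemma neg (hs : IsTruncatedSolution k x y) : IsTruncatedSolution k (fun t => -x t) y := by
  intro t ht
  constructor
  · refine (hs.hasDerivAt_x ht).neg.congr_deriv ?_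
    rw [sin_neg]
    ring
  · show HasDerivAt y (-y t ^ 2 * (y t - -x t * sinTaylor k (-x t))) t
    rw [sinTaylor_neg, neg_mul_neg]
    exact hs.hasDerivAt_y ht

lemma x_eq (hs : IsTruncatedSolution k x y) {t : ℝ} (ht : 0 ≤ t) :
    x t = x 0 * exp (∫ s in 0..t, (y s - x s * sin (x s))) :=
  eq_mul_exp_integral_of_hasDerivAt (g := fun s => y s - x s * sin (x s))
    (hs.continuousOn_y.sub
      (hs.continuousOn_x.mul (continuous_sin.comp_continuousOn hs.continuousOn_x)))
    (fun _ ht => hs.hasDerivAt_x ht) ht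

lemma y_eq (hs : IsTruncatedSolution k x y) {t : ℝ} (ht : 0 ≤ t) :
    y t = y 0 * exp (∫ s in 0..t, -y s * (y s - x s * sinTaylor k (x s))) :=
  eq_mul_exp_integral_of_hasDerivAt (g := fun s => -y s * (y s - x s * sinTaylor k (x s)))
    (hs.continuousOn_y.neg.mul (hs.continuousOn_y.sub (hs.continuousOn_x.mul
      ((continuous_sinTaylor k).comp_continuousOn hs.continuousOn_x))))
    (fun _ ht => (hs.hasDerivAt_y ht).congr_deriv (by ring)) ht

lemma x_nonneg (hs : IsTruncatedSolution k x y) (hx0 : 0 ≤ x 0) {t : ℝ} (ht : 0 ≤ t) :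
    0 ≤ x t := by
  rw [hs.x_eq ht]
  exact mul_nonneg hx0 (exp_pos _).le

lemma y_pos (hs : IsTruncatedSolution k x y) (hy0 : 0 < y 0) {t : ℝ} (ht : 0 ≤ t) : 0 < y t := by
  rw [hs.y_eq ht]
  exact mul_pos hy0 (exp_pos _)

lemma y_nonpos (hs : IsTruncatedSolution k x y) (hy0 : y 0 ≤ 0) {t : ℝ} (ht : 0 ≤ t) :
    y t ≤ 0 := by
  rw [hs.y_eq ht]
  exact mul_nonpos_of_nonpos_of_nonneg hy0 (exp_pos _).le

lemma x_lt_and_abs_y_lt (hs : IsTruncatedSolution k x y) (hk : Even k) {a : ℝ} (ha0 : 0 < a)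
    (ha1 : a ≤ 1) (hx : ∀ t ≥ 0, 0 ≤ x t) (hx0 : x 0 < a) (hy0 : |y 0| < a * sin a) :
    ∀ t ≥ 0, x t < a ∧ |y t| < a * sin a := by
  set b := a * sin a
  have hU : IsOpen {p : ℝ × ℝ | p.1 < a ∧ |p.2| < b} :=
    (isOpen_lt continuous_fst continuous_const).inter
      (isOpen_lt (continuous_abs.comp continuous_snd) continuous_const)
  refine (hs.continuousOn_x.prodMk hs.continuousOn_y).forall_mem_of_forall_Ico_mem hU ⟨hx0, hy0⟩
    fun τ hτ hpre => ?_
  have hxτ := hs.hasDerivAt_x hτ.le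
  have hyτ := hs.hasDerivAt_y hτ.le
  have hev : ∀ᶠ t in 𝓝[<] τ, x t < a ∧ |y t| < b := by
    filter_upwards [Ioo_mem_nhdsLT hτ] with t ht using hpre t ⟨ht.1.le, ht.2⟩
  have hxa : x τ ≤ a :=
    le_of_tendsto hxτ.continuousAt.continuousWithinAt (hev.mono fun t ht => ht.1.le)
  have hyb : |y τ| ≤ b := le_of_tendsto hyτ.continuousAt.abs.continuousWithinAt
    (hev.mono fun t ht => ht.2.le)
  have hQ : x τ * sinTaylor k (x τ) < b :=
    mul_sinTaylor_lt_mul_sin_of_le hk (hx τ hτ.le) hxa ha0 ha1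
  have hQ0 : 0 ≤ x τ * sinTaylor k (x τ) := mul_sinTaylor_nonneg hk (hx τ hτ.le) (hxa.trans ha1)
  -- On the horizontal sides `|y| = b` the field points inwards since `0 ≤ Q(x) < b`.
  have hyb' : |y τ| < b := by
    refine hyb.lt_of_ne fun h => ?_
    have hd := (hyτ.fun_pow 2).nonneg_of_eventually_le_left <| hev.mono fun t ht => by
      rw [← sq_abs (y t), ← sq_abs (y τ), h]
      exact pow_le_pow_left₀ (abs_nonneg _) ht.2.le 2
    have hy2 : y τ ^ 2 = b ^ 2 := by rw [← sq_abs, h]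
    have hyQ : y τ * (x τ * sinTaylor k (x τ)) < b ^ 2 := calc
      _ ≤ b * (x τ * sinTaylor k (x τ)) := mul_le_mul_of_nonneg_right (h ▸ le_abs_self _) hQ0
      _ < b ^ 2 := by rw [sq]; exact mul_lt_mul_of_pos_left hQ (mul_sin_pos ha0 ha1)
    have hkey : y τ * (-y τ ^ 2 * (y τ - x τ * sinTaylor k (x τ))) =
        b ^ 2 * (y τ * (x τ * sinTaylor k (x τ)) - b ^ 2) := by
      linear_combination (y τ * (x τ * sinTaylor k (x τ)) - y τ ^ 2 - b ^ 2) * hy2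
    norm_num at hd
    nlinarith [pow_pos (mul_sin_pos ha0 ha1) 2]
  -- On the vertical side `x = a` the field points inwards since `y < b = a sin a`.
  refine ⟨hxa.lt_of_ne fun h => ?_, hyb'⟩
  have hd := hxτ.nonneg_of_eventually_le_left (hev.mono fun t ht => h ▸ ht.1.le)
  rw [h] at hd
  change 0 ≤ a * (y τ - b) at hd
  nlinarith [le_abs_self (y τ)]

lemma eq_zero_of_tendsto (hs : IsTruncatedSolution k x y) (hk : Even k) {m L : ℝ} (hm0 : 0 ≤ m)
    (hm1 : m ≤ 1) (hx : Tendsto x atTop (𝓝 m)) (hy : Tendsto y atTop (𝓝 L)) :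
    m = 0 ∧ L = 0 := by
  have hxd : m * (L - m * sin m) = 0 :=
    eq_zero_of_tendsto_of_tendsto_deriv (fun _ ht => hs.hasDerivAt_x ht) hx
      (hx.mul (hy.sub (hx.mul ((continuous_sin.tendsto m).comp hx))))
  have hyd : -L ^ 2 * (L - m * sinTaylor k m) = 0 :=
    eq_zero_of_tendsto_of_tendsto_deriv (fun _ ht => hs.hasDerivAt_y ht) hy
      ((hy.pow 2).neg.mul (hy.sub (hx.mul (((continuous_sinTaylor k).tendsto m).comp hx))))
  obtain rfl : m = 0 := by
    by_contra hm
    have hm : 0 < m := hm0.lt_of_ne' hm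
    have hL : L = m * sin m := by linarith [(mul_eq_zero.1 hxd).resolve_left hm.ne']
    have hLpos : 0 < L := hL ▸ mul_sin_pos hm hm1
    have hQ := mul_sinTaylor_lt_mul_sin hk hm hm1
    nlinarith [pow_pos hLpos 2]
  simpa using hyd

lemma tendsto_zero_of_y_nonpos (hs : IsTruncatedSolution k x y) (hk : Even k)
    (hx : ∀ t ≥ 0, x t ∈ Icc 0 1) (hy0 : y 0 ≤ 0) :
    Tendsto x atTop (𝓝 0) ∧ Tendsto y atTop (𝓝 0) := by
  have hy : ∀ t ≥ 0, y t ≤ 0 := fun _ ht => hs.y_nonpos hy0 ht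
  have hQ : ∀ t ≥ 0, 0 ≤ x t * sinTaylor k (x t) ∧ x t * sinTaylor k (x t) ≤ x t * sin (x t) :=
    fun t ht => ⟨mul_sinTaylor_nonneg hk (hx t ht).1 (hx t ht).2,
      mul_sinTaylor_le_mul_sin hk (hx t ht).1 (hx t ht).2⟩
  have hxanti : AntitoneOn x (Ici 0) :=
    antitoneOn_Ici_of_hasDerivAt_nonpos (fun _ ht => hs.hasDerivAt_x ht) fun t ht =>
      mul_nonpos_of_nonneg_of_nonpos (hx t ht.le).1 (by linarith [hy t ht.le, hQ t ht.le])
  have hymono : MonotoneOn y (Ici 0) :=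
    monotoneOn_Ici_of_hasDerivAt_nonneg (fun _ ht => hs.hasDerivAt_y ht) fun t ht =>
      mul_nonneg_of_nonpos_of_nonpos (neg_nonpos.2 (sq_nonneg _))
        (by linarith [hy t ht.le, hQ t ht.le])
  obtain ⟨m, hm0, hxm, hmx⟩ := hxanti.exists_tendsto_atTop fun t ht => (hx t ht).1
  obtain ⟨L, -, hyL, -⟩ := hymono.exists_tendsto_atTop hy
  obtain ⟨rfl, rfl⟩ := hs.eq_zero_of_tendsto hk hm0 ((hmx 0 le_rfl).trans (hx 0 le_rfl).2) hxm hyL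
  exact ⟨hxm, hyL⟩

lemma tendsto_zero_of_forall_mul_sin_lt (hs : IsTruncatedSolution k x y) (hk : Even k)
    (hx : ∀ t ≥ 0, x t ∈ Icc 0 1) (hyP : ∀ t ≥ 0, x t * sin (x t) < y t) :
    Tendsto x atTop (𝓝 0) ∧ Tendsto y atTop (𝓝 0) := by
  have hQ : ∀ t ≥ 0, 0 ≤ x t * sinTaylor k (x t) ∧ x t * sinTaylor k (x t) ≤ x t * sin (x t) :=
    fun t ht => ⟨mul_sinTaylor_nonneg hk (hx t ht).1 (hx t ht).2,
      mul_sinTaylor_le_mul_sin hk (hx t ht).1 (hx t ht).2⟩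
  have hxmono : MonotoneOn x (Ici 0) :=
    monotoneOn_Ici_of_hasDerivAt_nonneg (fun _ ht => hs.hasDerivAt_x ht) fun t ht =>
      mul_nonneg (hx t ht.le).1 (sub_nonneg.2 (hyP t ht.le).le)
  have hyanti : AntitoneOn y (Ici 0) :=
    antitoneOn_Ici_of_hasDerivAt_nonpos (fun _ ht => hs.hasDerivAt_y ht) fun t ht =>
      mul_nonpos_of_nonpos_of_nonneg (neg_nonpos.2 (sq_nonneg _))
        (by linarith [hyP t ht.le, hQ t ht.le])
  obtain ⟨m, hm1, hxm, -⟩ := hxmono.exists_tendsto_atTop fun t ht => (hx t ht).2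
  obtain ⟨L, -, hyL, -⟩ := hyanti.exists_tendsto_atTop (b := 0) fun t ht => by
    linarith [hyP t ht, hQ t ht]
  have hm0 : 0 ≤ m := ge_of_tendsto hxm <| (eventually_ge_atTop 0).mono fun t ht => (hx t ht).1
  obtain ⟨rfl, rfl⟩ := hs.eq_zero_of_tendsto hk hm0 hm1 hxm hyL
  exact ⟨hxm, hyL⟩

lemma le_mul_sin_of_le (hs : IsTruncatedSolution k x y) (hk : Even k)
    (hx : ∀ t ≥ 0, x t ∈ Icc 0 1) (hy : ∀ t ≥ 0, 0 < y t) {t₁ : ℝ} (ht₁ : 0 ≤ t₁)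
    (h₁ : y t₁ ≤ x t₁ * sin (x t₁)) : ∀ t ≥ t₁, y t ≤ x t * sin (x t) := by
  have hg : ∀ t ≥ t₁, HasDerivAt (fun t => y t - x t * sin (x t))
      (-y t ^ 2 * (y t - x t * sinTaylor k (x t)) -
        (sin (x t) + x t * cos (x t)) * (x t * (y t - x t * sin (x t)))) t := fun t ht =>
    (hs.hasDerivAt_y (ht₁.trans ht)).sub
      ((hasDerivAt_mul_sin (x t)).comp t (hs.hasDerivAt_x (ht₁.trans ht)))
  intro t ht
  have hle := image_le_of_deriv_right_lt_deriv_boundary' (B := fun _ => 0) (B' := fun _ => 0)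
    (fun s hs' => (hg s hs'.1).continuousAt.continuousWithinAt)
    (fun s hs' => (hg s hs'.1).hasDerivWithinAt) (sub_nonpos.2 h₁) continuousOn_const
    (fun _ _ => hasDerivWithinAt_const _ _ _) (fun s hs' hzero => ?_) ⟨ht, le_rfl⟩
  · exact sub_nonpos.1 hle
  -- On `y = x sin x` (where `x > 0` since `y > 0`) the field crosses the curve downwards.
  have hs0 : 0 ≤ s := ht₁.trans hs'.1
  have hys : y s = x s * sin (x s) := sub_eq_zero.1 hzero
  have hxs : 0 < x s := (hx s hs0).1.lt_of_ne fun h => by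
    have := hy s hs0
    rw [hys, ← h, zero_mul] at this
    exact this.false
  have hQ : x s * sinTaylor k (x s) < y s := hys ▸ mul_sinTaylor_lt_mul_sin hk hxs (hx s hs0).2
  simp only [hzero, mul_zero, sub_zero]
  nlinarith [mul_pos (pow_pos (hy s hs0) 2) (sub_pos.2 hQ)]

lemma tendsto_y_zero_of_x_mem_Icc (hs : IsTruncatedSolution k x y) (hk : Even k) {t₁ m : ℝ}
    (ht₁ : 0 ≤ t₁) (hm : 0 < m) (hx : ∀ t ≥ t₁, x t ∈ Icc m 1) (hy : ∀ t ≥ t₁, 0 < y t) :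
    Tendsto y atTop (𝓝 0) := by
  obtain ⟨ρ, hρ, hρP⟩ := exists_pos_le_mul_sin_sub_mul_sinTaylor hk hm
  -- `log x - 1 / y` decreases at rate at least `ρ`, so `1 / y` grows at least linearly.
  set M : ℝ → ℝ := fun t => log (x t) - (y t)⁻¹
  have hM : ∀ t ≥ t₁, HasDerivAt M (x t * sinTaylor k (x t) - x t * sin (x t)) t := by
    intro t ht
    have hx0 : x t ≠ 0 := (hm.trans_le (hx t ht).1).ne'
    have hy0 : y t ≠ 0 := (hy t ht).ne'
    refine (((hs.hasDerivAt_x (ht₁.trans ht)).log hx0).sub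
      ((hs.hasDerivAt_y (ht₁.trans ht)).inv hy0)).congr_deriv ?_
    field_simp
    ring
  have hMle : ∀ t ≥ t₁, M t - M t₁ ≤ -ρ * (t - t₁) := fun t ht =>
    (convex_Ici t₁).image_sub_le_mul_sub_of_deriv_le
      (fun s hs' => (hM s hs').continuousAt.continuousWithinAt)
      (fun s hs' => (hM s (interior_subset hs')).differentiableAt.differentiableWithinAt)
      (fun s hs' => by
        rw [(hM s (interior_subset hs')).deriv]
        linarith [hρP (x s) (hx s (interior_subset hs'))])
      t₁ self_mem_Ici t ht ht
  have hlin : Tendsto (fun t => log m - M t₁ + ρ * (t - t₁)) atTop atTop :=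
    tendsto_atTop_add_const_left _ _
      ((tendsto_atTop_add_const_right _ _ tendsto_id).const_mul_atTop hρ)
  have hinv : Tendsto (fun t => (y t)⁻¹) atTop atTop := by
    refine tendsto_atTop_mono' _ ?_ hlin
    filter_upwards [eventually_ge_atTop t₁] with t ht
    have hlog := log_le_log hm (hx t ht).1
    linarith [hMle t ht]
  simpa [Pi.inv_def] using hinv.inv_tendsto_atTop

lemma tendsto_zero_of_le_mul_sin (hs : IsTruncatedSolution k x y) (hk : Even k)
    (hx : ∀ t ≥ 0, x t ∈ Icc 0 1) (hy : ∀ t ≥ 0, 0 < y t) {t₁ : ℝ} (ht₁ : 0 ≤ t₁)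
    (h₁ : y t₁ ≤ x t₁ * sin (x t₁)) : Tendsto x atTop (𝓝 0) ∧ Tendsto y atTop (𝓝 0) := by
  have hle := hs.le_mul_sin_of_le hk hx hy ht₁ h₁
  have hxanti : AntitoneOn x (Ici t₁) :=
    antitoneOn_Ici_of_hasDerivAt_nonpos (fun _ ht => hs.hasDerivAt_x (ht₁.trans ht))
      fun t ht => mul_nonpos_of_nonneg_of_nonpos (hx t (ht₁.trans ht.le)).1
        (sub_nonpos.2 (hle t ht.le))
  obtain ⟨m, hm0, hxm, hmx⟩ :=
    hxanti.exists_tendsto_atTop fun t ht => (hx t (ht₁.trans ht)).1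
  have hyL : Tendsto y atTop (𝓝 0) := by
    rcases hm0.eq_or_lt with rfl | hm
    · have hP : Tendsto (fun t => x t * sin (x t)) atTop (𝓝 (0 * sin 0)) :=
        hxm.mul ((continuous_sin.tendsto 0).comp hxm)
      rw [zero_mul] at hP
      refine tendsto_of_tendsto_of_tendsto_of_le_of_le' tendsto_const_nhds hP ?_ ?_
      · filter_upwards [eventually_ge_atTop 0] with t ht using (hy t ht).le
      · filter_upwards [eventually_ge_atTop t₁] with t ht using hle t ht
    · exact hs.tendsto_y_zero_of_x_mem_Icc hk ht₁ hm
        (fun t ht => ⟨hmx t ht, (hx t (ht₁.trans ht)).2⟩) fun t ht => hy t (ht₁.trans ht)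
  obtain ⟨rfl, -⟩ := hs.eq_zero_of_tendsto hk hm0 ((hmx t₁ le_rfl).trans (hx t₁ ht₁).2) hxm hyL
  exact ⟨hxm, hyL⟩

lemma tendsto_zero_of_mem_Icc (hs : IsTruncatedSolution k x y) (hk : Even k)
    (hx : ∀ t ≥ 0, x t ∈ Icc 0 1) : Tendsto x atTop (𝓝 0) ∧ Tendsto y atTop (𝓝 0) := by
  rcases le_or_gt (y 0) 0 with hy0 | hy0
  · exact hs.tendsto_zero_of_y_nonpos hk hx hy0
  have hy : ∀ t ≥ 0, 0 < y t := fun _ ht => hs.y_pos hy0 ht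
  by_cases h : ∃ t₁ ≥ 0, y t₁ ≤ x t₁ * sin (x t₁)
  · obtain ⟨t₁, ht₁, h₁⟩ := h
    exact hs.tendsto_zero_of_le_mul_sin hk hx hy ht₁ h₁
  · push Not at h
    exact hs.tendsto_zero_of_forall_mul_sin_lt hk hx h

lemma abs_x_lt_and_abs_y_lt (hs : IsTruncatedSolution k x y) (hk : Even k) {a : ℝ} (ha0 : 0 < a)
    (ha1 : a ≤ 1) (h0 : ‖(x 0, y 0)‖ < a * sin a) :
    ∀ t ≥ 0, |x t| < a ∧ |y t| < a * sin a := by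
  wlog hx0 : 0 ≤ x 0 generalizing x
  · simpa using this hs.neg (by simpa [Prod.norm_def] using h0) (by linarith)
  rw [Prod.norm_def, max_lt_iff, norm_eq_abs, norm_eq_abs] at h0
  have hx : ∀ t ≥ 0, 0 ≤ x t := fun _ ht => hs.x_nonneg hx0 ht
  have hxa : x 0 < a :=
    (le_abs_self _).trans_lt (h0.1.trans_le (mul_le_of_le_one_right ha0.le (sin_le_one a)))
  intro t ht
  rw [abs_of_nonneg (hx t ht)]
  exact hs.x_lt_and_abs_y_lt hk ha0 ha1 hx hxa h0.2 t ht

lemma tendsto_nhds_zero (hs : IsTruncatedSolution k x y) (hk : Even k)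
    (h0 : ‖(x 0, y 0)‖ < sin 1) : Tendsto (fun t => (x t, y t)) atTop (𝓝 (0, 0)) := by
  wlog hx0 : 0 ≤ x 0 generalizing x
  · have h := (Prod.tendsto_iff _ _).1 (this hs.neg (by simpa [Prod.norm_def] using h0)
      (by linarith))
    simpa using h.1.neg.prodMk_nhds h.2
  have hbox := hs.abs_x_lt_and_abs_y_lt hk one_pos le_rfl (by rwa [one_mul])
  have hx : ∀ t ≥ 0, 0 ≤ x t := fun _ ht => hs.x_nonneg hx0 ht
  obtain ⟨hxl, hyl⟩ := hs.tendsto_zero_of_mem_Icc hk fun t ht =>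
    ⟨hx t ht, (le_abs_self _).trans (hbox t ht).1.le⟩
  exact hxl.prodMk_nhds hyl

end IsTruncatedSolution

theorem taylor_truncation_asymptotic_stability_general (k : ℕ) (hke : Even k) :
    (∀ ε > 0, ∃ δ > 0, ∀ x y : ℝ → ℝ, IsTruncatedSolution k x y →
      ‖(x 0, y 0)‖ < δ → ∀ t : ℝ, 0 ≤ t → ‖(x t, y t)‖ < ε) ∧
    (∃ δ > 0, ∀ x y : ℝ → ℝ, IsTruncatedSolution k x y → ‖(x 0, y 0)‖ < δ →
      Filter.Tendsto (fun t : ℝ => (x t, y t)) Filter.atTop (nhds ((0 : ℝ), (0 : ℝ)))) := by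
  refine ⟨fun ε hε => ?_, ⟨sin 1, sin_pos_of_pos_of_lt_pi one_pos (by linarith [pi_gt_three]),
    fun x y hs h0 => hs.tendsto_nhds_zero hke h0⟩⟩
  set a := min ε 1
  have ha0 : 0 < a := lt_min hε one_pos
  have ha1 : a ≤ 1 := min_le_right ε 1
  refine ⟨a * sin a, mul_sin_pos ha0 ha1, fun x y hs h0 t ht => ?_⟩
  obtain ⟨hxt, hyt⟩ := hs.abs_x_lt_and_abs_y_lt hke ha0 ha1 h0 t ht
  rw [Prod.norm_def, max_lt_iff, norm_eq_abs, norm_eq_abs]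
  exact ⟨hxt.trans_le (min_le_left ε 1),
    hyt.trans_le ((mul_le_of_le_one_right ha0.le (sin_le_one a)).trans (min_le_left ε 1))⟩

/-- Failure of Taylor truncation in the appendix example: for even `k ≥ 2`, the origin is
asymptotically stable (Lyapunov stable and locally attracting) for the truncated system. -/
theorem taylor_truncation_asymptotic_stability (k : ℕ) (hk : 2 ≤ k) (hke : Even k) :
    (∀ ε > 0, ∃ δ > 0, ∀ x y : ℝ → ℝ, IsTruncatedSolution k x y →
      ‖(x 0, y 0)‖ < δ → ∀ t : ℝ, 0 ≤ t → ‖(x t, y t)‖ < ε) ∧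
    (∃ δ > 0, ∀ x y : ℝ → ℝ, IsTruncatedSolution k x y → ‖(x 0, y 0)‖ < δ →
      Filter.Tendsto (fun t : ℝ => (x t, y t)) Filter.atTop (nhds ((0 : ℝ), (0 : ℝ)))) :=
  taylor_truncation_asymptotic_stability_general k hke
end
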